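/- arXiv:1912.01192 — 3 statements merged into one kernel-verified Lean document; each statement's English description precedes it below -/
import Mathlib

section
/- Let ℓ ∈ [0,1], u > 0, γ > 0, and let I ∈ {0,1}. Then ℓ·I/(u+γ) ≤ (1/(2γ))·ln(1 + 2γ·ℓ·I/u). -/
/-! Since `ℓ I ≤ 1`, the denominator `u + γ` dominates `u + γ ℓ I`, and
`x / (u + γ x) = (1 / 2γ) · z / (1 + z / 2)` with `z = 2γx/u`; conclude with
`z / (1 + z / 2) ≤ log (1 + z)` for `z ≥ 0`. -/

lemma div_add_mul_le_log_one_add {x u γ : ℝ} (hx : 0 ≤ x) (hu : 0 < u) (hγ : 0 < γ) :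
    x / (u + γ * x) ≤ 1 / (2 * γ) * Real.log (1 + 2 * γ * x / u) := by
  set z := 2 * γ * x / u with hz
  calc x / (u + γ * x) = 1 / (2 * γ) * (2 * z / (z + 2)) := by
        rw [hz]; field_simp; ring
    _ ≤ 1 / (2 * γ) * Real.log (1 + z) := by
        gcongr; exact Real.le_log_one_add_of_nonneg (by positivity)

theorem ix_estimator_log_bound (ℓ u γ I : ℝ)
    (hℓ0 : 0 ≤ ℓ) (hℓ1 : ℓ ≤ 1) (hu : 0 < u) (hγ : 0 < γ)
    (hI : I = 0 ∨ I = 1) :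
    ℓ * I / (u + γ) ≤ (1 / (2 * γ)) * Real.log (1 + 2 * γ * ℓ * I / u) := by
  obtain ⟨hx0, hx1⟩ : 0 ≤ ℓ * I ∧ ℓ * I ≤ 1 := by
    rcases hI with rfl | rfl <;> simp [hℓ0, hℓ1]
  calc ℓ * I / (u + γ) ≤ ℓ * I / (u + γ * (ℓ * I)) := by
        gcongr; exact mul_le_of_le_one_right hγ.le hx1
    _ ≤ 1 / (2 * γ) * Real.log (1 + 2 * γ * (ℓ * I) / u) :=
        div_add_mul_le_log_one_add hx0 hu hγ
    _ = 1 / (2 * γ) * Real.log (1 + 2 * γ * ℓ * I / u) := by rw [← mul_assoc]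
end

section
/- Let q ∈ ℝⁿ have positive entries, let ℓ̂ ∈ ℝⁿ have nonnegative entries, and η > 0. Define q̃ᵢ = qᵢ·exp(−η·ℓ̂ᵢ). Then D(q‖q̃) = Σᵢ (η·qᵢ·ℓ̂ᵢ − qᵢ + qᵢ·exp(−η·ℓ̂ᵢ)) ≤ η²·Σᵢ qᵢ·ℓ̂ᵢ², where D is the unnormalized KL-divergence D(q‖q') = Σᵢ qᵢ ln(qᵢ/q'ᵢ) − Σᵢ(qᵢ − q'ᵢ). -/
open Real

theorem Real.exp_neg_le_one_sub_add_sq {z : ℝ} (hz : 0 ≤ z) : exp (-z) ≤ 1 - z + z ^ 2 := by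
  have h_inv : exp (-z) ≤ 1 / (1 + z) := by
    rw [exp_neg, inv_eq_one_div]
    exact one_div_le_one_div_of_le (by linarith) (by linarith [add_one_le_exp z])
  have h_geom : 1 / (1 + z) ≤ 1 - z + z ^ 2 := by
    rw [div_le_iff₀ (by linarith)]
    nlinarith [pow_nonneg hz 3]
  exact h_inv.trans h_geom

theorem mul_log_div_mul_exp_neg (q z : ℝ) : q * log (q / (q * exp (-z))) = q * z := by
  rcases eq_or_ne q 0 with rfl | hq
  · simp
  · rw [div_mul_eq_div_div, div_self hq, one_div, log_inv, log_exp, neg_neg]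

theorem mul_sub_add_mul_exp_neg_le {q z : ℝ} (hq : 0 ≤ q) (hz : 0 ≤ z) :
    q * z - q + q * exp (-z) ≤ q * z ^ 2 := by
  have := mul_le_mul_of_nonneg_left (exp_neg_le_one_sub_add_sq hz) hq
  linarith

open Finset in
theorem omd_local_norm_bound (n : ℕ) (q lhat : Fin n → ℝ)
    (hq : ∀ i, 0 < q i) (hl : ∀ i, 0 ≤ lhat i) (η : ℝ) (hη : 0 < η)
    (D : (Fin n → ℝ) → (Fin n → ℝ) → ℝ)
    (hD : ∀ u v, D u v = (∑ i, u i * Real.log (u i / v i)) - ∑ i, (u i - v i))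
    (qtil : Fin n → ℝ) (hqtil : ∀ i, qtil i = q i * Real.exp (-η * lhat i)) :
    D q qtil = ∑ i, (η * q i * lhat i - q i + q i * Real.exp (-η * lhat i)) ∧
    D q qtil ≤ η ^ 2 * ∑ i, q i * lhat i ^ 2 := by
  have h_eq : D q qtil = ∑ i, (η * q i * lhat i - q i + q i * exp (-η * lhat i)) := by
    rw [hD, ← sum_sub_distrib]
    refine sum_congr rfl fun i _ => ?_
    rw [hqtil, neg_mul, mul_log_div_mul_exp_neg]
    ring
  refine ⟨h_eq, ?_⟩
  rw [h_eq, mul_sum]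
  refine sum_le_sum fun i _ => ?_
  have h_term := mul_sub_add_mul_exp_neg_le (hq i).le (mul_nonneg hη.le (hl i))
  rw [neg_mul]
  linear_combination h_term
end

section
/- Let q: X × A × X → [0,1] where X is partitioned into layers X₀,…,X_L with X₀ = {x₀}, X_L = {x_L}, and q is supported on consecutive-layer triples. Suppose (1) for every k ∈ {0,…,L−1}: Σ_{x∈X_k} Σ_{a∈A} Σ_{x'∈X_{k+1}} q(x,a,x') = 1, and (2) for every k ∈ {1,…,L−1} and x ∈ X_k: Σ_{x'∈X_{k−1}} Σ_{a} q(x',a,x) = Σ_{x'∈X_{k+1}} Σ_{a} q(x,a,x'). Define, whenever the denominators are positive, Pᵠ(x'|x,a) = q(x,a,x') / Σ_{y∈X_{k(x)+1}} q(x,a,y) and πᵠ(a|x) = Σ_{x'} q(x,a,x') / Σ_{b,x'} q(x,b,x'). Then q is the occupancy measure induced by executing policy πᵠ in the MDP with transition Pᵠ: for every triple (x,a,x') with x ∈ X_k, q(x,a,x') equals the probability that the layer-k state is x, the action taken is a, and the layer-(k+1) state is x', when the trajectory starts at x₀ and follows πᵠ and Pᵠ. -/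
/-!
By induction on the layer, the probability `stateProb Pq πq x₀ k x` of reaching a state `x` of
layer `k` equals its outflow `∑ a, ∑ x', q x a x'`: at layer `0` this is the normalization
constraint, and one step of the chain turns outflows of layer `k` into inflows of layer `k + 1`,
which flow conservation turns back into outflows. Multiplying the outflow of `x` by
`πq x a * Pq x a x'` cancels both denominators, each of which vanishes only where its numerator
does, and leaves `q x a x'`.
-/

open Finset

/-- Probability of being at state `x` in layer `k`, when starting from `x₀` and
following policy `π` in the MDP with transition function `P`:
the probability of a trajectory is the product over steps of `π(a|x) · P(x'|x,a)`. -/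
def stateProb {X A : Type*} [Fintype X] [Fintype A] [DecidableEq X]
    (P : X → A → X → ℝ) (π : X → A → ℝ) (x₀ : X) : ℕ → X → ℝ
  | 0, x => if x = x₀ then 1 else 0
  | k + 1, x => ∑ y : X, ∑ a : A, stateProb P π x₀ k y * π y a * P y a x

theorem sum_mul_div_sum_of_nonneg {ι 𝕜 : Type*} [Field 𝕜] [LinearOrder 𝕜] [IsStrictOrderedRing 𝕜]
    {s : Finset ι} {f : ι → 𝕜} (hf : ∀ j ∈ s, 0 ≤ f j) {i : ι} (hi : i ∈ s) :
    (∑ j ∈ s, f j) * (f i / ∑ j ∈ s, f j) = f i :=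
  mul_div_cancel_of_imp' fun h => (sum_eq_zero_iff_of_nonneg hf).1 h i hi

theorem outflow_mul_inducedPolicy_mul_inducedTransition {X A : Type*} [Fintype X] [Fintype A]
    {q : X → A → X → ℝ} {Pq : X → A → X → ℝ} {πq : X → A → ℝ} (hq0 : ∀ x a x', 0 ≤ q x a x')
    (hPq : ∀ x a x', Pq x a x' = q x a x' / ∑ y : X, q x a y)
    (hπq : ∀ x a, πq x a = (∑ x' : X, q x a x') / ∑ b : A, ∑ x' : X, q x b x') (x : X) (a : A)
    (x' : X) :
    (∑ b : A, ∑ y : X, q x b y) * πq x a * Pq x a x' = q x a x' := by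
  rw [hπq, hPq, sum_mul_div_sum_of_nonneg (fun b _ => sum_nonneg fun y _ => hq0 x b y)
    (mem_univ a), sum_mul_div_sum_of_nonneg (fun y _ => hq0 x a y) (mem_univ x')]

section LayeredMDP

variable {X A : Type*} [Fintype X] [Fintype A] [DecidableEq X]

theorem stateProb_eq_zero_of_layer_ne {P : X → A → X → ℝ} (π : X → A → ℝ) {x₀ : X}
    {layer : X → ℕ} (hx₀ : layer x₀ = 0) (hP : ∀ y a x, P y a x ≠ 0 → layer x = layer y + 1) :
    ∀ k x, layer x ≠ k → stateProb P π x₀ k x = 0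
  | 0, x, hx => by rw [stateProb, if_neg (by rintro rfl; exact hx hx₀)]
  | k + 1, x, hx => by
    rw [stateProb]
    refine sum_eq_zero fun y _ => sum_eq_zero fun a _ => ?_
    by_cases hy : layer y = k
    · have hPz : P y a x = 0 := by_contra fun h => hx (by rw [hP y a x h, hy])
      rw [hPz, mul_zero]
    · rw [stateProb_eq_zero_of_layer_ne π hx₀ hP k y hy, zero_mul, zero_mul]

theorem stateProb_eq_outflow {L : ℕ} {layer : X → ℕ} {x₀ : X} (hx₀ : layer x₀ = 0)
    (hlayer0 : ∀ x, layer x = 0 → x = x₀) {q : X → A → X → ℝ} (hq0 : ∀ x a x', 0 ≤ q x a x')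
    (hsupp : ∀ x a x', q x a x' ≠ 0 → layer x' = layer x + 1)
    (hnorm0 : ∑ a : A, ∑ x' : X, q x₀ a x' = 1)
    (hflow : ∀ x, 1 ≤ layer x → layer x < L →
      ∑ x' : X, ∑ a : A, q x' a x = ∑ x' : X, ∑ a : A, q x a x')
    {Pq : X → A → X → ℝ} {πq : X → A → ℝ}
    (hPq : ∀ x a x', Pq x a x' = q x a x' / ∑ y : X, q x a y)
    (hπq : ∀ x a, πq x a = (∑ x' : X, q x a x') / ∑ b : A, ∑ x' : X, q x b x') :
    ∀ k < L, ∀ x, layer x = k → stateProb Pq πq x₀ k x = ∑ a : A, ∑ x' : X, q x a x' := by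
  have hPsupp : ∀ y a x, Pq y a x ≠ 0 → layer x = layer y + 1 := fun y a x h =>
    hsupp y a x fun hq => h (by rw [hPq, hq, zero_div])
  intro k
  induction k with
  | zero =>
    rintro - x hx
    rw [hlayer0 x hx, stateProb, if_pos rfl, hnorm0]
  | succ k ih =>
    intro hk x hx
    have hstep : ∀ y a, stateProb Pq πq x₀ k y * πq y a * Pq y a x = q y a x := by
      intro y a
      by_cases hy : layer y = k
      · rw [ih (by omega) y hy, outflow_mul_inducedPolicy_mul_inducedTransition hq0 hPq hπq]
      · have hq : q y a x = 0 := by_contra fun h => by have := hsupp y a x h; omega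
        rw [stateProb_eq_zero_of_layer_ne πq hx₀ hPsupp k y hy, zero_mul, zero_mul, hq]
    calc stateProb Pq πq x₀ (k + 1) x = ∑ y : X, ∑ a : A, q y a x :=
          sum_congr rfl fun y _ => sum_congr rfl fun a _ => hstep y a
      _ = ∑ x' : X, ∑ a : A, q x a x' := hflow x (by omega) (by omega)
      _ = ∑ a : A, ∑ x' : X, q x a x' := sum_comm

end LayeredMDP

theorem occupancy_measure_characterization_general
    {X A : Type*} [Fintype X] [Fintype A] [DecidableEq X]
    (L : ℕ) (layer : X → ℕ) (x₀ : X)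
    (hx₀ : layer x₀ = 0)
    (hlayer0 : ∀ x, layer x = 0 → x = x₀)
    (q : X → A → X → ℝ)
    (hq0 : ∀ x a x', 0 ≤ q x a x')
    (hsupp : ∀ x a x', q x a x' ≠ 0 → layer x' = layer x + 1)
    (hnorm : ∀ k < L,
      ∑ x ∈ univ.filter (fun x => layer x = k), ∑ a : A, ∑ x' : X, q x a x' = 1)
    (hflow : ∀ x, 1 ≤ layer x → layer x ≤ L - 1 →
      ∑ x' : X, ∑ a : A, q x' a x = ∑ x' : X, ∑ a : A, q x a x')
    (Pq : X → A → X → ℝ) (πq : X → A → ℝ)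
    (hPq : ∀ x a x', Pq x a x' = q x a x' / ∑ y : X, q x a y)
    (hπq : ∀ x a, πq x a = (∑ x' : X, q x a x') / ∑ b : A, ∑ x' : X, q x b x') :
    ∀ x a x', layer x < L → layer x' = layer x + 1 →
      q x a x' = stateProb Pq πq x₀ (layer x) x * πq x a * Pq x a x' := by
  intro x a x' hx _
  have hlayer_zero : univ.filter (fun y => layer y = 0) = {x₀} := by
    ext y
    simpa only [mem_filter, mem_univ, true_and, mem_singleton] using ⟨hlayer0 y, fun h => h ▸ hx₀⟩
  have hnorm0 : ∑ a : A, ∑ x' : X, q x₀ a x' = 1 := by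
    simpa only [hlayer_zero, sum_singleton] using hnorm 0 (by omega)
  rw [stateProb_eq_outflow hx₀ hlayer0 hq0 hsupp hnorm0 (fun y h1 h2 => hflow y h1 (by omega))
    hPq hπq (layer x) hx x rfl, outflow_mul_inducedPolicy_mul_inducedTransition hq0 hPq hπq]

/-- Lemma 1 of the paper: in a loop-free layered MDP, any `q` satisfying the per-layer
normalization constraint and the flow-conservation constraint is the occupancy measure
induced by its induced policy `πq` and induced transition function `Pq`. -/
theorem occupancy_measure_characterization
    {X A : Type*} [Fintype X] [Fintype A] [DecidableEq X]
    (L : ℕ) (layer : X → ℕ) (x₀ xL : X)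
    (hx₀ : layer x₀ = 0) (hxL : layer xL = L)
    (hlayer0 : ∀ x, layer x = 0 → x = x₀) (hlayerL : ∀ x, layer x = L → x = xL)
    (hrange : ∀ x, layer x ≤ L)
    (q : X → A → X → ℝ)
    (hq0 : ∀ x a x', 0 ≤ q x a x') (hq1 : ∀ x a x', q x a x' ≤ 1)
    (hsupp : ∀ x a x', q x a x' ≠ 0 → layer x' = layer x + 1)
    (hnorm : ∀ k < L,
      ∑ x ∈ univ.filter (fun x => layer x = k), ∑ a : A, ∑ x' : X, q x a x' = 1)
    (hflow : ∀ x, 1 ≤ layer x → layer x ≤ L - 1 →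
      ∑ x' : X, ∑ a : A, q x' a x = ∑ x' : X, ∑ a : A, q x a x')
    (Pq : X → A → X → ℝ) (πq : X → A → ℝ)
    (hPq : ∀ x a x', Pq x a x' = q x a x' / ∑ y : X, q x a y)
    (hπq : ∀ x a, πq x a = (∑ x' : X, q x a x') / ∑ b : A, ∑ x' : X, q x b x') :
    ∀ x a x', layer x < L → layer x' = layer x + 1 →
      q x a x' = stateProb Pq πq x₀ (layer x) x * πq x a * Pq x a x' :=
  occupancy_measure_characterization_general L layer x₀ hx₀ hlayer0 q hq0 hsupp hnorm hflow Pq πq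
    hPq hπq
end
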